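/- Let K₀ ⊆ K be finite extensions of ℚ_p inside a fixed algebraic closure of ℚ_p such that K/K₀ is totally ramified, and let e be the ramification index of K over ℚ_p. Let Q ≥ 1 be an integer and let σ be a ℚ_p-algebra automorphism of K with σ(K₀) = K₀ and such that |σ(β) − β^Q|_p < 1 for all β in the valuation ring O_{K₀}. Then for every α in the valuation ring O_K one has |σ(α) − α^Q|_p ≤ p^{−1/e}. -/

import Mathlib

/-!
The `p`-adic absolute value on `\bar{ℚ}_p` is the spectral norm over `ℚ_p`: a nonarchimedean
multiplicative norm, invariant under `ℚ_p`-automorphisms. As `K/K₀` is totally ramified of degree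
`r`, the residue fields of `K` and `K₀` agree: every `α ∈ O_K` is congruent modulo the maximal ideal
to some `β ∈ O_{K₀}`. Otherwise `|β₁ + β₂ α| = max |β₁| |β₂|` for all `β₁, β₂ ∈ K₀`, and since the
powers `1, π, …, π^{r-1}` of a uniformizer have absolute values that are distinct modulo the value
group of `K₀`, the `2r` elements `α^i π^j` (`i < 2`, `j < r`) would be linearly independent over
`K₀`. Then `σα ≡ σβ ≡ β^Q ≡ α^Q`, so `|σα - α^Q| < 1`, which in the value group `p^{ℤ/e}` of `K`
means `|σα - α^Q| ≤ p^{-1/e}`.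
-/

open IntermediateField

/-- The unique extension of the `p`-adic absolute value to the algebraic closure of `ℚ_p`
(normalized by `|p|_p = p⁻¹`), given on `α` by `‖N_{ℚ_p(α)/ℚ_p}(α)‖ ^ (1/[ℚ_p(α):ℚ_p])`. -/
noncomputable def padicAbs (p : ℕ) [Fact p.Prime] (α : AlgebraicClosure ℚ_[p]) : ℝ :=
  ‖Algebra.norm ℚ_[p] (AdjoinSimple.gen ℚ_[p] α)‖ ^
    ((Module.finrank ℚ_[p] ℚ_[p]⟮α⟯ : ℝ)⁻¹)

/-- `e` is the ramification index over `ℚ_p` of a finite extension `K` of `ℚ_p` (inside a fixed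
algebraic closure of `ℚ_p`): equivalently, the value group of the `p`-adic absolute value on
`K \ {0}` is exactly `p^{ℤ/e}`. -/
def IsRamificationIdx (p : ℕ) [Fact p.Prime]
    (K : IntermediateField ℚ_[p] (AlgebraicClosure ℚ_[p])) (e : ℕ) : Prop :=
  0 < e ∧
  (∀ x ∈ K, x ≠ 0 → ∃ m : ℤ, padicAbs p x = (p : ℝ) ^ (-(m : ℝ) / (e : ℝ))) ∧
  (∀ m : ℤ, ∃ x ∈ K, x ≠ 0 ∧ padicAbs p x = (p : ℝ) ^ (-(m : ℝ) / (e : ℝ)))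

namespace IsNonarchimedean

section AddGroup

variable {α F : Type*} [AddCommGroup α] [FunLike F α ℝ]

theorem apply_sub_lt_trans {v : F} (hv : IsNonarchimedean v) {c : ℝ} {x y z : α}
    (hxy : v (x - y) < c) (hyz : v (y - z) < c) : v (x - z) < c := by
  rw [← sub_add_sub_cancel x y z]
  exact (hv _ _).trans_lt (max_lt hxy hyz)

theorem eq_zero_of_sum_eq_zero [AddGroupNormClass F α ℝ] {v : F} (hv : IsNonarchimedean v)
    {ι : Type*} {s : Finset ι} {t : ι → α}
    (hinj : ∀ i ∈ s, ∀ j ∈ s, t i ≠ 0 → t j ≠ 0 → v (t i) = v (t j) → i = j)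
    (hsum : ∑ i ∈ s, t i = 0) : ∀ i ∈ s, t i = 0 := by
  intro i hi
  by_contra hti
  obtain ⟨k, hk, hmax⟩ := s.exists_max_image (fun j => v (t j)) ⟨i, hi⟩
  have htk : t k ≠ 0 := by
    rintro h
    have := hmax i hi
    rw [h, map_zero] at this
    exact hti ((map_eq_zero_iff_eq_zero v).1 (this.antisymm (apply_nonneg v _)))
  have hsum_eq := hv.apply_sum_eq_of_lt (l := t) (fun a => (map_neg_eq_map v a).symm) hk
    fun j hj hjk => by
      by_cases htj : t j = 0
      · rw [htj, map_zero]
        exact map_pos_of_ne_zero v htk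
      · exact (hmax j hj).lt_of_ne fun h => hjk (hinj j hj k hk htj htk h)
  rw [hsum, map_zero] at hsum_eq
  exact (map_pos_of_ne_zero v htk).ne hsum_eq

end AddGroup

theorem apply_pow_sub_pow_lt_one {R F : Type*} [CommRing R] [FunLike F R ℝ]
    [MulRingSeminormClass F R ℝ] {v : F} (hv : IsNonarchimedean v) {a b : R}
    (ha : v a ≤ 1) (hb : v b ≤ 1) (hab : v (a - b) < 1) (n : ℕ) : v (a ^ n - b ^ n) < 1 := by
  obtain ⟨i, -, hi⟩ := hv.finset_image_add (map_zero v) (apply_nonneg v)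
    (fun i => a ^ i * b ^ (n - 1 - i)) (Finset.range n)
  have hgeom : v (∑ i ∈ Finset.range n, a ^ i * b ^ (n - 1 - i)) ≤ 1 := by
    refine hi.trans ?_
    rw [map_mul, map_pow, map_pow]
    exact mul_le_one₀ (pow_le_one₀ (apply_nonneg v a) ha) (pow_nonneg (apply_nonneg v b) _)
      (pow_le_one₀ (apply_nonneg v b) hb)
  rw [← geom_sum₂_mul, map_mul]
  exact (mul_le_of_le_one_left (apply_nonneg v _) hgeom).trans_lt hab

end IsNonarchimedean

theorem le_of_lt_one_of_eq_zpow {q x : ℝ} (hq0 : 0 < q) (hq1 : q < 1) {m : ℤ} (hx : x = q ^ m)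
    (hlt : x < 1) : x ≤ q := by
  rw [hx, zpow_lt_one_iff_right_of_lt_one₀ hq0 hq1] at *
  simpa using zpow_le_zpow_right_of_le_one₀ hq0 hq1.le (by omega : (1 : ℤ) ≤ m)

section ResidueField

variable {L G : Type*} [Field L] [FunLike G L ℝ] [MulRingNormClass G L ℝ] {v : G}

theorem apply_add_mul_eq_max (hv : IsNonarchimedean v) {K₀ : Subfield L} {α : L}
    (hα : v α ≤ 1) (hfar : ∀ β ∈ K₀, v β ≤ 1 → 1 ≤ v (α - β))
    {β₁ β₂ : L} (h₁ : β₁ ∈ K₀) (h₂ : β₂ ∈ K₀) : v (β₁ + β₂ * α) = max (v β₁) (v β₂) := by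
  rcases eq_or_ne β₂ 0 with rfl | hβ₂
  · simp
  have hα1 : v α = 1 := le_antisymm hα (by simpa using hfar 0 K₀.zero_mem (by simp))
  set γ := β₁ / β₂
  have hγ : -γ ∈ K₀ := K₀.neg_mem (K₀.div_mem h₁ h₂)
  have hsplit : β₁ + β₂ * α = β₂ * (α - -γ) := by
    simp only [γ]
    field_simp
    ring
  have hβ₁ : v β₁ = v β₂ * v (-γ) := by
    rw [← map_mul, mul_neg, mul_div_cancel₀ _ hβ₂, map_neg_eq_map]
  rw [hsplit, map_mul, hβ₁]
  rcases le_or_gt (v (-γ)) 1 with hγ1 | hγ1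
  · have hunit : v (α - -γ) = 1 := by
      refine le_antisymm ?_ (hfar _ hγ hγ1)
      rw [sub_eq_add_neg]
      exact (hv _ _).trans (max_le hα (by rwa [map_neg_eq_map]))
    rw [hunit, mul_one, max_eq_right (mul_le_of_le_one_right (apply_nonneg v _) hγ1)]
  · have hbig : v (α - -γ) = v (-γ) := by
      rw [sub_eq_add_neg, ← map_neg_eq_map v (-γ)]
      exact hv.add_eq_right_of_lt (by rwa [hα1, map_neg_eq_map])
    rw [hbig, max_eq_left (le_mul_of_one_le_right (apply_nonneg v _) hγ1.le)]

theorem eq_zero_of_sum_mul_pow_eq_zero (hv : IsNonarchimedean v) {q : ℝ} (hq0 : 0 < q)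
    (hq1 : q < 1) {π : L} (hπ : v π = q) {r : ℕ} {y : Fin r → L}
    (hy : ∀ j, y j ≠ 0 → ∃ m : ℤ, v (y j) = q ^ (r * m))
    (hsum : ∑ j, y j * π ^ (j : ℕ) = 0) (j : Fin r) : y j = 0 := by
  have hπ0 : π ≠ 0 := by
    rintro rfl
    rw [map_zero] at hπ
    exact hq0.ne hπ
  refine (mul_eq_zero.1 (hv.eq_zero_of_sum_eq_zero ?_ hsum j (Finset.mem_univ j))).resolve_right
    (pow_ne_zero _ hπ0)
  intro i _ k _ hi hk hik
  obtain ⟨m, hm⟩ := hy i (left_ne_zero_of_mul hi)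
  obtain ⟨n, hn⟩ := hy k (left_ne_zero_of_mul hk)
  rw [map_mul, map_mul, map_pow, map_pow, hm, hn, hπ, ← zpow_natCast, ← zpow_natCast,
    ← zpow_add₀ hq0.ne', ← zpow_add₀ hq0.ne'] at hik
  have hexp := congrArg (· % (r : ℤ)) (zpow_right_injective₀ hq0 hq1.ne hik)
  simp only [add_comm _ ((_ : ℕ) : ℤ), Int.add_mul_emod_self_left] at hexp
  rw [Int.emod_eq_of_lt (by positivity) (by exact_mod_cast i.2),
    Int.emod_eq_of_lt (by positivity) (by exact_mod_cast k.2)] at hexp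
  exact Fin.ext (by exact_mod_cast hexp)

open Module in
theorem exists_sub_lt_one_of_valueGroup {F : Type*} [Field F] [Algebra F L]
    {K₀ K : IntermediateField F L} (h : K₀ ≤ K) (hv : IsNonarchimedean v) {q : ℝ} (hq0 : 0 < q)
    (hq1 : q < 1) {π : L} (hπK : π ∈ K) (hπ : v π = q) (hr : 0 < finrank K₀ (extendScalars h))
    (hK₀ : ∀ x ∈ K₀, x ≠ 0 → ∃ m : ℤ, v x = q ^ (finrank K₀ (extendScalars h) * m))
    {α : L} (hαK : α ∈ K) (hα : v α ≤ 1) : ∃ β ∈ K₀, v β ≤ 1 ∧ v (α - β) < 1 := by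
  set r := finrank K₀ (extendScalars h)
  by_contra! hfar
  have : Module.Finite K₀ (extendScalars h) := Module.finite_of_finrank_pos hr
  let w : Fin 2 × Fin r → extendScalars h := fun ij =>
    ⟨α ^ (ij.1 : ℕ) * π ^ (ij.2 : ℕ), mul_mem (pow_mem hαK _) (pow_mem hπK _)⟩
  have hli : LinearIndependent K₀ w := by
    refine Fintype.linearIndependent_iff.2 fun g hg ij => ?_
    have hsum : ∑ j : Fin r, ((g (0, j) : L) + g (1, j) * α) * π ^ (j : ℕ) = 0 := by
      simpa [Fintype.sum_prod_type, Fin.sum_univ_two, w, Algebra.smul_def, add_mul, mul_assoc,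
        Finset.sum_add_distrib] using congrArg Subtype.val hg
    have horth (j : Fin r) := apply_add_mul_eq_max hv (K₀ := K₀.toSubfield) hα hfar
      (g (0, j)).2 (g (1, j)).2
    have hy := eq_zero_of_sum_mul_pow_eq_zero hv hq0 hq1 hπ (fun j hj => ?_) hsum
    · obtain ⟨i, j⟩ := ij
      have hmax := max_le_iff.1 ((horth j).symm.trans_le (by rw [hy j, map_zero]))
      have hgij : v (g (i, j) : L) ≤ 0 := by
        fin_cases i
        exacts [hmax.1, hmax.2]
      exact_mod_cast (map_eq_zero_iff_eq_zero v).1 (hgij.antisymm (apply_nonneg v _))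
    · have hpos := (horth j).symm.trans_gt (map_pos_of_ne_zero v hj)
      rw [horth j]
      rcases max_choice (v (g (0, j) : L)) (v (g (1, j) : L)) with hm | hm <;> rw [hm] at hpos ⊢ <;>
        exact hK₀ _ (g _).2 fun h0 => by simp [h0] at hpos
  have := hli.fintype_card_le_finrank
  simp only [Fintype.card_prod, Fintype.card_fin] at this
  omega

end ResidueField

theorem spectralNorm_algEquiv_apply {K L : Type*} [NormedField K] [Field L] [Algebra K L]
    {E : IntermediateField K L} (σ : E ≃ₐ[K] E) (x : E) :
    spectralNorm K L (σ x) = spectralNorm K L x := by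
  rw [spectralNorm, spectralNorm, ← IntermediateField.minpoly_eq, ← IntermediateField.minpoly_eq,
    minpoly.algEquiv_eq]

section Padic

variable {p : ℕ} [Fact p.Prime]

theorem padicAbs_eq_spectralNorm (α : AlgebraicClosure ℚ_[p]) :
    padicAbs p α = spectralNorm ℚ_[p] (AlgebraicClosure ℚ_[p]) α := by
  have hα : IsIntegral ℚ_[p] α := Algebra.IsIntegral.isIntegral α
  have hnorm := Algebra.PowerBasis.norm_gen_eq_coeff_zero_minpoly (adjoin.powerBasis hα)
  rw [adjoin.powerBasis_gen, minpoly_gen] at hnorm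
  rw [padicAbs, hnorm, spectralNorm.spectralNorm_eq_norm_coeff_zero_rpow, adjoin.finrank hα,
    norm_mul, norm_pow, norm_neg, norm_one, one_pow, one_mul, one_div]

namespace IsRamificationIdx

variable {K : IntermediateField ℚ_[p] (AlgebraicClosure ℚ_[p])} {e₀ : ℕ}

theorem exists_spectralNorm_eq_zpow (he₀ : IsRamificationIdx p K e₀) {r e : ℕ} (he : e = r * e₀)
    (hr : 0 < r) {x : AlgebraicClosure ℚ_[p]} (hxK : x ∈ K) (hx : x ≠ 0) :
    ∃ m : ℤ, spectralNorm ℚ_[p] (AlgebraicClosure ℚ_[p]) x =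
      ((p : ℝ) ^ (-(1 : ℝ) / (e : ℝ))) ^ ((r : ℤ) * m) := by
  obtain ⟨m, hm⟩ := he₀.2.1 x hxK hx
  refine ⟨m, ?_⟩
  have : (r : ℝ) ≠ 0 := by positivity
  have : (e₀ : ℝ) ≠ 0 := by exact_mod_cast he₀.1.ne'
  rw [← padicAbs_eq_spectralNorm, hm, ← Real.rpow_intCast, ← Real.rpow_mul (Nat.cast_nonneg _), he]
  congr 1
  push_cast
  field_simp

theorem exists_uniformizer (he₀ : IsRamificationIdx p K e₀) :
    ∃ π ∈ K, spectralNorm ℚ_[p] (AlgebraicClosure ℚ_[p]) π = (p : ℝ) ^ (-(1 : ℝ) / (e₀ : ℝ)) := by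
  obtain ⟨π, hπK, -, hπ⟩ := he₀.2.2 1
  exact ⟨π, hπK, by rw [← padicAbs_eq_spectralNorm, hπ, Int.cast_one]⟩

end IsRamificationIdx

end Padic

theorem statement8_general (p : ℕ) [Fact p.Prime]
    (K₀ K : IntermediateField ℚ_[p] (AlgebraicClosure ℚ_[p])) (hK₀K : K₀ ≤ K)
    (e₀ e : ℕ) (he₀ : IsRamificationIdx p K₀ e₀) (he : IsRamificationIdx p K e)
    -- `K/K₀` is totally ramified: `e(K/K₀) = e/e₀` equals the degree `[K : K₀]`
    (htot : e = Module.finrank ↥K₀ ↥(IntermediateField.extendScalars hK₀K) * e₀)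
    (Q : ℕ)
    (σ : ↥K ≃ₐ[ℚ_[p]] ↥K)
    (hβ : ∀ β : ↥K, (β : AlgebraicClosure ℚ_[p]) ∈ K₀ →
      padicAbs p (β : AlgebraicClosure ℚ_[p]) ≤ 1 →
      padicAbs p ((σ β : AlgebraicClosure ℚ_[p]) - (β : AlgebraicClosure ℚ_[p]) ^ Q) < 1) :
    ∀ α : ↥K, padicAbs p (α : AlgebraicClosure ℚ_[p]) ≤ 1 →
      padicAbs p ((σ α : AlgebraicClosure ℚ_[p]) - (α : AlgebraicClosure ℚ_[p]) ^ Q) ≤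
        (p : ℝ) ^ (-(1 : ℝ) / (e : ℝ)) := by
  intro α hα
  simp only [padicAbs_eq_spectralNorm, ← spectralMulAlgNorm_def] at hβ hα ⊢
  set v := spectralMulAlgNorm ℚ_[p] (AlgebraicClosure ℚ_[p])
  have hv : IsNonarchimedean v := isNonarchimedean_spectralNorm
  have hr : 0 < Module.finrank K₀ (extendScalars hK₀K) := Nat.pos_of_mul_pos_right (htot ▸ he.1)
  have hp : (1 : ℝ) < p := by exact_mod_cast (Fact.out : p.Prime).one_lt
  have hq0 : 0 < (p : ℝ) ^ (-(1 : ℝ) / (e : ℝ)) := Real.rpow_pos_of_pos (by linarith) _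
  have hq1 : (p : ℝ) ^ (-(1 : ℝ) / (e : ℝ)) < 1 :=
    Real.rpow_lt_one_of_one_lt_of_neg hp
      (div_neg_of_neg_of_pos (by norm_num) (by exact_mod_cast he.1))
  obtain ⟨π, hπK, hπ⟩ := he.exists_uniformizer
  obtain ⟨β, hβK₀, hβ1, hαβ⟩ := exists_sub_lt_one_of_valueGroup hK₀K hv hq0 hq1 hπK hπ hr
    (fun x hxK₀ hx => he₀.exists_spectralNorm_eq_zpow htot hr hxK₀ hx) α.2 hα
  let β' : K := ⟨β, hK₀K hβK₀⟩
  have hσ : v (σ α - σ β') = v (α - β) := by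
    have hcoe : (σ α - σ β' : AlgebraicClosure ℚ_[p]) = ((σ (α - β') : K) : _) := by
      rw [map_sub]
      rfl
    rw [hcoe, spectralMulAlgNorm_def, spectralNorm_algEquiv_apply]
    rfl
  -- `σα ≡ σβ ≡ β^Q ≡ α^Q` modulo the open unit ball
  have hlt := hv.apply_sub_lt_trans (hσ ▸ hαβ) (hv.apply_sub_lt_trans (hβ β' hβK₀ hβ1)
    (hv.apply_pow_sub_pow_lt_one hβ1 hα (by rwa [map_sub_rev]) Q))
  rcases eq_or_ne ((σ α : AlgebraicClosure ℚ_[p]) - α ^ Q) 0 with h0 | h0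
  · rw [h0, map_zero]
    exact hq0.le
  obtain ⟨m, hm⟩ := he.exists_spectralNorm_eq_zpow (r := 1) (one_mul e).symm one_pos
    (sub_mem (σ α).2 (pow_mem α.2 Q)) h0
  exact le_of_lt_one_of_eq_zpow hq0 hq1 (by rwa [Nat.cast_one, one_mul] at hm) hlt

/-- Let `K₀ ⊆ K` be finite extensions of `ℚ_p` inside a fixed algebraic closure of `ℚ_p` such that
`K/K₀` is totally ramified, and let `e` be the ramification index of `K` over `ℚ_p`.  Let
`Q ≥ 1` be an integer and let `σ` be a `ℚ_p`-algebra automorphism of `K` with `σ(K₀) = K₀` and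
such that `|σ(β) − β^Q|_p < 1` for all `β` in the valuation ring `O_{K₀}`.  Then for every `α`
in the valuation ring `O_K` one has `|σ(α) − α^Q|_p ≤ p^{−1/e}`. -/
theorem statement8 (p : ℕ) [Fact p.Prime]
    (K₀ K : IntermediateField ℚ_[p] (AlgebraicClosure ℚ_[p])) (hK₀K : K₀ ≤ K)
    [FiniteDimensional ℚ_[p] ↥K₀] [FiniteDimensional ℚ_[p] ↥K]
    (e₀ e : ℕ) (he₀ : IsRamificationIdx p K₀ e₀) (he : IsRamificationIdx p K e)
    -- `K/K₀` is totally ramified: `e(K/K₀) = e/e₀` equals the degree `[K : K₀]`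
    (htot : e = Module.finrank ↥K₀ ↥(IntermediateField.extendScalars hK₀K) * e₀)
    (Q : ℕ) (hQ : 1 ≤ Q)
    (σ : ↥K ≃ₐ[ℚ_[p]] ↥K)
    -- `σ(K₀) = K₀`
    (hσK₀ : ∀ x : ↥K, ((x : AlgebraicClosure ℚ_[p]) ∈ K₀ ↔
      ((σ x : AlgebraicClosure ℚ_[p]) ∈ K₀)))
    (hβ : ∀ β : ↥K, (β : AlgebraicClosure ℚ_[p]) ∈ K₀ →
      padicAbs p (β : AlgebraicClosure ℚ_[p]) ≤ 1 →
      padicAbs p ((σ β : AlgebraicClosure ℚ_[p]) - (β : AlgebraicClosure ℚ_[p]) ^ Q) < 1) :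
    ∀ α : ↥K, padicAbs p (α : AlgebraicClosure ℚ_[p]) ≤ 1 →
      padicAbs p ((σ α : AlgebraicClosure ℚ_[p]) - (α : AlgebraicClosure ℚ_[p]) ^ Q) ≤
        (p : ℝ) ^ (-(1 : ℝ) / (e : ℝ)) :=
  statement8_general p K₀ K hK₀K e₀ e he₀ he htot Q σ hβ
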